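/- arXiv:2208.01953 — 3 statements merged into one kernel-verified Lean document; each statement's English description precedes it below -/
import Mathlib

section
/- Let G be a finite simple graph and let u, v be adjacent vertices that both have degree exactly 2 in G. Then every cycle of G containing u also contains v, and consequently no minimal feedback vertex set of G contains both u and v. -/
/-!
A cycle through `u` leaves `u` along two distinct edges; since `u` has degree 2 these are all
the edges at `u`, so the cycle also visits its neighbour `v`. Hence every cycle hit by `u` is
hit by `v`, and deleting `u` from a feedback vertex set that contains `v` leaves a feedback
vertex set, contradicting minimality.
-/

open SimpleGraph

def IsFVS {V : Type*} (G : SimpleGraph V) (S : Set V) : Prop :=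
  (G.induce (Sᶜ : Set V)).IsAcyclic

def IsMinFVS {V : Type*} (G : SimpleGraph V) (S : Set V) : Prop :=
  IsFVS G S ∧ ∀ T : Set V, T ⊂ S → ¬ IsFVS G T

namespace SimpleGraph

variable {V : Type*} {G : SimpleGraph V}

lemma eq_or_eq_of_adj_of_degree_eq_two {u v w w' : V} [Fintype (G.neighborSet u)]
    (hdu : G.degree u = 2) (hww' : w ≠ w') (hw : G.Adj u w) (hw' : G.Adj u w')
    (hv : G.Adj u v) : v = w ∨ v = w' := by
  classical
  by_contra! h
  have hsub : ({v, w, w'} : Finset V) ⊆ G.neighborFinset u := by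
    intro z hz
    simp only [Finset.mem_insert, Finset.mem_singleton] at hz
    rcases hz with rfl | rfl | rfl <;> simpa
  have := Finset.card_le_card hsub
  rw [Finset.card_eq_three.mpr ⟨v, w, w', h.1, h.2, hww', rfl⟩, card_neighborFinset_eq_degree,
    hdu] at this
  omega

lemma Walk.IsCycle.mem_support_of_adj_of_degree_eq_two {x u v : V} [Fintype (G.neighborSet u)]
    {c : G.Walk x x} (hc : c.IsCycle) (hu : u ∈ c.support) (hdu : G.degree u = 2)
    (huv : G.Adj u v) : v ∈ c.support := by
  classical
  have hc' : (c.rotate u hu).IsCycle := hc.rotate hu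
  rw [← mem_support_rotate_iff c u hu]
  rcases eq_or_eq_of_adj_of_degree_eq_two hdu hc'.snd_ne_penultimate
    (adj_snd hc'.not_nil) (adj_penultimate hc'.not_nil).symm huv with rfl | rfl
  · exact getVert_mem_support _ _
  · exact getVert_mem_support _ _

lemma Walk.IsCycle.induce {s : Set V} {x : V} {c : G.Walk x x} (hc : c.IsCycle)
    (hs : ∀ y ∈ c.support, y ∈ s) : (c.induce s hs).IsCycle := by
  rwa [← isCycle_map_iff_of_injective (f := (Embedding.induce (G := G) s).toHom)
    (Embedding.induce (G := G) s).injective, map_induce]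

end SimpleGraph

section FeedbackVertexSet

variable {V : Type*} {G : SimpleGraph V} {S : Set V}

lemma isFVS_iff :
    IsFVS G S ↔ ∀ (x : V) (c : G.Walk x x), c.IsCycle → ∃ y ∈ c.support, y ∈ S := by
  constructor
  · intro hS x c hc
    by_contra! h
    exact hS _ (hc.induce h)
  · intro h x c hc
    obtain ⟨y, hy, hyS⟩ := h _ _ (hc.map (f := (Embedding.induce (G := G) Sᶜ).toHom)
      (Embedding.induce (G := G) Sᶜ).injective)
    rw [Walk.support_map, List.mem_map] at hy
    obtain ⟨z, -, rfl⟩ := hy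
    exact z.2 hyS

lemma IsFVS.diff_singleton {u v : V}
    (hS : IsFVS G S) (hvS : v ∈ S) (hvu : v ≠ u)
    (hcycle : ∀ (x : V) (c : G.Walk x x), c.IsCycle → u ∈ c.support → v ∈ c.support) :
    IsFVS G (S \ {u}) := by
  rw [isFVS_iff] at hS ⊢
  intro x c hc
  obtain ⟨y, hy, hyS⟩ := hS x c hc
  by_cases hyu : y = u
  · subst hyu
    exact ⟨v, hcycle x c hc hy, hvS, hvu⟩
  · exact ⟨y, hy, hyS, hyu⟩

lemma IsMinFVS.not_mem_and_mem {u v : V}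
    (hS : IsMinFVS G S) (hvu : v ≠ u)
    (hcycle : ∀ (x : V) (c : G.Walk x x), c.IsCycle → u ∈ c.support → v ∈ c.support) :
    ¬ (u ∈ S ∧ v ∈ S) := by
  rintro ⟨huS, hvS⟩
  exact hS.2 (S \ {u}) (Set.sdiff_singleton_ssubset.mpr huS) (hS.1.diff_singleton hvS hvu hcycle)

end FeedbackVertexSet

theorem adjacent_degree_two_cycles_general {V : Type*} [Fintype V]
    {G : SimpleGraph V} [DecidableRel G.Adj] (u v : V) (huv : G.Adj u v)
    (hdu : G.degree u = 2) :
    (∀ (x : V) (c : G.Walk x x), c.IsCycle → u ∈ c.support → v ∈ c.support) ∧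
      (∀ S : Set V, IsMinFVS G S → ¬ (u ∈ S ∧ v ∈ S)) := by
  have hcycle : ∀ (x : V) (c : G.Walk x x), c.IsCycle → u ∈ c.support → v ∈ c.support :=
    fun _ _ hc hu => hc.mem_support_of_adj_of_degree_eq_two hu hdu huv
  exact ⟨hcycle, fun S hS => hS.not_mem_and_mem huv.ne' hcycle⟩

/-- If `u` and `v` are adjacent and both have degree 2, then every cycle
through `u` also passes through `v`, and no minimal feedback vertex set
contains both of them. -/
theorem adjacent_degree_two_cycles {V : Type*} [Fintype V] [DecidableEq V]
    {G : SimpleGraph V} [DecidableRel G.Adj] (u v : V) (huv : G.Adj u v)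
    (hdu : G.degree u = 2) (hdv : G.degree v = 2) :
    (∀ (x : V) (c : G.Walk x x), c.IsCycle → u ∈ c.support → v ∈ c.support) ∧
      (∀ S : Set V, IsMinFVS G S → ¬ (u ∈ S ∧ v ∈ S)) :=
  adjacent_degree_two_cycles_general u v huv hdu
end

section
/- For n ≥ 2, consider the graph G_n obtained from two adjacent vertices x, y both joined to every vertex of an independent set of size n. Then the vertex cover number of G_n equals 2, while G_n has a minimal feedback vertex set of size n. Hence the gap between the vertex cover number and the maximum size of a minimal feedback vertex set can be arbitrarily large. -/
open SimpleGraph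

def IsVertexCover {V : Type*} (G : SimpleGraph V) (C : Set V) : Prop :=
  ∀ ⦃u w : V⦄, G.Adj u w → u ∈ C ∨ w ∈ C

/-- The graph `G_n` on `Fin (n+2)`: vertices `0 = x` and `1 = y` are adjacent
to each other and to every vertex `i ≥ 2` (an independent set of size `n`). -/
def Gn (n : ℕ) : SimpleGraph (Fin (n + 2)) :=
  SimpleGraph.fromRel (fun i _ => i = 0 ∨ i = 1)

/-!
`{x, y}` meets every edge, and the disjoint edges `x v₁`, `y v₂` force every vertex cover to
have two vertices. Deleting all the `vᵢ` leaves the single edge `x y`, a forest; putting any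
`vᵢ` back creates the triangle `x y vᵢ`, so this feedback vertex set of size `n` is minimal.
-/

section General

variable {V : Type*} {G : SimpleGraph V}

lemma IsFVS.cliqueFreeOn_compl {S : Set V} (h : IsFVS G S) : G.CliqueFreeOn Sᶜ 3 :=
  (cliqueFree_induce_iff _ _ _).1 (IsAcyclic.cliqueFree h le_rfl)

lemma isFVS_of_compl_subset_pair {S : Set V} {a b : V} (h : Sᶜ ⊆ {a, b}) : IsFVS G S := by
  refine IsAcyclic.of_card_le_two ((Set.encard_le_encard h).trans ?_)
  exact (Set.encard_insert_le {b} a).trans_eq (by rw [Set.encard_singleton, one_add_one_eq_two])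

lemma IsVertexCover.two_le_ncard [Finite V] {C : Set V} (hC : _root_.IsVertexCover G C)
    {a b c d : V} (hab : G.Adj a b) (hcd : G.Adj c d)
    (hac : a ≠ c) (had : a ≠ d) (hbc : b ≠ c) (hbd : b ≠ d) : 2 ≤ C.ncard := by
  refine (Set.one_lt_ncard).2 ?_
  rcases hC hab with hu | hu <;> rcases hC hcd with hw | hw
  exacts [⟨a, hu, c, hw, hac⟩, ⟨a, hu, d, hw, had⟩, ⟨b, hu, c, hw, hbc⟩, ⟨b, hu, d, hw, hbd⟩]

end General

lemma Gn_adj {n : ℕ} {i j : Fin (n + 2)} :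
    (Gn n).Adj i j ↔ i ≠ j ∧ (i = 0 ∨ i = 1 ∨ j = 0 ∨ j = 1) := by
  simp only [Gn, fromRel_adj]
  tauto

lemma Gn_zero_ne_one (n : ℕ) : (0 : Fin (n + 2)) ≠ 1 := by
  simp

lemma Gn_isVertexCover_zero_one (n : ℕ) : _root_.IsVertexCover (Gn n) {0, 1} := by
  intro u w huw
  rcases (Gn_adj.1 huw).2 with h | h | h | h <;> simp [h]

lemma Gn_two_le_ncard_of_isVertexCover {n : ℕ} (hn : 2 ≤ n) {C : Set (Fin (n + 2))}
    (hC : _root_.IsVertexCover (Gn n) C) : 2 ≤ C.ncard := by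
  let v₂ : Fin (n + 2) := ⟨2, by omega⟩
  let v₃ : Fin (n + 2) := ⟨3, by omega⟩
  have h0v₂ : (0 : Fin (n + 2)) ≠ v₂ := by simp [v₂, Fin.ext_iff]
  have h1v₃ : (1 : Fin (n + 2)) ≠ v₃ := by simp [v₃, Fin.ext_iff]
  refine hC.two_le_ncard (a := 0) (b := v₂) (c := 1) (d := v₃) (Gn_adj.2 ⟨h0v₂, by simp⟩)
    (Gn_adj.2 ⟨h1v₃, by simp⟩) (Gn_zero_ne_one n) ?_ ?_ ?_ <;>
    simp [v₂, v₃, Fin.ext_iff]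

lemma Gn_isMinFVS_compl_zero_one (n : ℕ) : IsMinFVS (Gn n) {0, 1}ᶜ := by
  refine ⟨isFVS_of_compl_subset_pair (compl_compl _).subset, fun T hT hFVS => ?_⟩
  obtain ⟨v, hvS, hvT⟩ := Set.exists_of_ssubset hT
  have hv0 : v ≠ 0 := fun h => hvS (by simp [h])
  have hv1 : v ≠ 1 := fun h => hvS (by simp [h])
  have htri : (Gn n).IsNClique 3 {0, 1, v} :=
    is3Clique_triple_iff.2 ⟨Gn_adj.2 ⟨Gn_zero_ne_one n, by simp⟩, Gn_adj.2 ⟨hv0.symm, by simp⟩,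
      Gn_adj.2 ⟨hv1.symm, by simp⟩⟩
  have hsub : ↑({0, 1, v} : Finset (Fin (n + 2))) ⊆ Tᶜ := by
    simp only [Finset.coe_insert, Finset.coe_singleton, Set.insert_subset_iff,
      Set.singleton_subset_iff]
    exact ⟨fun h => hT.subset h (by simp), fun h => hT.subset h (by simp), hvT⟩
  exact hFVS.cliqueFreeOn_compl hsub htri

lemma Gn_ncard_compl_zero_one (n : ℕ) : ({0, 1}ᶜ : Set (Fin (n + 2))).ncard = n := by
  rw [Set.ncard_compl, Set.ncard_pair (Gn_zero_ne_one n)]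
  simp

/-- `vc(G_n) = 2` while `G_n` has a minimal feedback vertex set of size `n`:
the gap between the vertex cover number and the maximum size of a minimal
feedback vertex set can be arbitrarily large. -/
theorem vc_vs_max_minimal_fvs (n : ℕ) (hn : 2 ≤ n) :
    sInf {k : ℕ | ∃ C : Set (Fin (n + 2)), _root_.IsVertexCover (Gn n) C ∧ C.ncard = k} = 2 ∧
    ∃ S : Set (Fin (n + 2)), IsMinFVS (Gn n) S ∧ S.ncard = n := by
  refine ⟨IsLeast.csInf_eq ⟨?_, ?_⟩, ⟨_, Gn_isMinFVS_compl_zero_one n, Gn_ncard_compl_zero_one n⟩⟩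
  · exact ⟨{0, 1}, Gn_isVertexCover_zero_one n, Set.ncard_pair (Gn_zero_ne_one n)⟩
  · rintro k ⟨C, hC, rfl⟩
    exact Gn_two_le_ncard_of_isVertexCover hn hC
end

section
/- Let G be a finite simple graph on n vertices and let G' be obtained from G by adding a vertex x adjacent to all of V(G), vertices x₁,…,x_{n+3} each adjacent to x, and a vertex y adjacent to each xᵢ. If C is a minimal vertex cover of G with |C| ≥ k, then C ∪ {x₂, x₃, …, x_{n+3}} is a minimal feedback vertex set of G' of size at least k + n + 2. -/
open SimpleGraph

def IsMinVertexCover {V : Type*} (G : SimpleGraph V) (C : Set V) : Prop :=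
  _root_.IsVertexCover G C ∧ ∀ T : Set V, T ⊂ C → ¬ _root_.IsVertexCover G T

/-- Relation for the extended graph `G'` (see paper): `Sum.inr false = x`,
`Sum.inr true = y`, `Sum.inl (Sum.inl v)` are vertices of `G`, and
`Sum.inl (Sum.inr i)` are the new vertices `x₁,…,x_{n+3}`. -/
def extRel {V : Type*} [Fintype V] (G : SimpleGraph V) :
    (V ⊕ Fin (Fintype.card V + 3)) ⊕ Bool →
    (V ⊕ Fin (Fintype.card V + 3)) ⊕ Bool → Prop :=
  fun a b =>
    match a, b with
    | .inl (.inl v), .inl (.inl w) => G.Adj v w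
    | .inr false, .inl _ => True
    | .inr true, .inl (.inr _) => True
    | _, _ => False

def Gext {V : Type*} [Fintype V] (G : SimpleGraph V) :
    SimpleGraph ((V ⊕ Fin (Fintype.card V + 3)) ⊕ Bool) :=
  SimpleGraph.fromRel (extRel G)

/-!
Removing `C ∪ {x₂, …, x_{n+3}}` from `G'` leaves `x`, `y`, `x₁` and the independent set `V \ C`,
which form a tree: `x` is joined to `x₁` and to `V \ C`, and `y` hangs off `x₁`. Putting a vertex
`v ∈ C` back closes a triangle `x v w`, where `w ∉ C` is a neighbour of `v` that exists by
minimality of `C`; putting `xᵢ` back closes the square `x xᵢ y x₁`.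
-/

namespace SimpleGraph

variable {W : Type*} {H : SimpleGraph W}

lemma Walk.IsCycle.exists_adj_ne {u v : W} {c : H.Walk u u} (hc : c.IsCycle)
    (hv : v ∈ c.support) :
    ∃ a b, a ≠ b ∧ H.Adj v a ∧ H.Adj v b ∧ a ∈ c.support ∧ b ∈ c.support := by
  obtain ⟨a, b, hab, hset⟩ := Set.ncard_eq_two.mp (hc.ncard_neighborSet_toSubgraph_eq_two hv)
  have hmem : ∀ w ∈ c.toSubgraph.neighborSet v, H.Adj v w ∧ w ∈ c.support := fun w hw =>
    ⟨c.toSubgraph.adj_sub hw, (c.mem_verts_toSubgraph).mp hw.snd_mem⟩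
  obtain ⟨ha, ha'⟩ := hmem a (by simp [hset])
  obtain ⟨hb, hb'⟩ := hmem b (by simp [hset])
  exact ⟨a, b, hab, ha, hb, ha', hb'⟩

lemma Walk.IsCycle.notMem_support {u v : W} {c : H.Walk u u} (hc : c.IsCycle) (a : W)
    (h : ∀ w, H.Adj v w → w ∈ c.support → w = a) : v ∉ c.support := fun hv =>
  let ⟨_, _, hab, ha, hb, ha', hb'⟩ := hc.exists_adj_ne hv
  hab ((h _ ha ha').trans (h _ hb hb').symm)

lemma Walk.isCycle_triangle {a b c : W} (hab : H.Adj a b) (hbc : H.Adj b c) (hca : H.Adj c a) :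
    (Walk.cons hab (.cons hbc (.cons hca .nil))).IsCycle := by
  have := hab.ne; have := hbc.ne; have := hca.ne
  simp [Walk.isCycle_def, Walk.isTrail_def]
  tauto

lemma Walk.isCycle_square {a b c d : W} (hab : H.Adj a b) (hbc : H.Adj b c) (hcd : H.Adj c d)
    (hda : H.Adj d a) (hac : a ≠ c) (hbd : b ≠ d) :
    (Walk.cons hab (.cons hbc (.cons hcd (.cons hda .nil)))).IsCycle := by
  have := hab.ne; have := hbc.ne; have := hcd.ne; have := hda.ne
  simp [Walk.isCycle_def, Walk.isTrail_def]
  tauto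

end SimpleGraph

lemma isFVS_iff_s15 {W : Type*} {H : SimpleGraph W} {S : Set W} :
    IsFVS H S ↔ ∀ u (c : H.Walk u u), c.IsCycle → ∃ v ∈ c.support, v ∈ S := by
  have hmap {u} (c : (H.induce Sᶜ).Walk u u) :
      (c.map (Embedding.induce Sᶜ).toHom).IsCycle ↔ c.IsCycle :=
    Walk.isCycle_map_iff_of_injective Subtype.val_injective
  refine ⟨fun hS u c hc => ?_, fun h u c hc => ?_⟩
  · by_contra! hcS
    exact hS (c.induce Sᶜ hcS) ((hmap _).mp (by rwa [Walk.map_induce]))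
  · obtain ⟨v, hv, hvS⟩ := h _ _ ((hmap c).mpr hc)
    rw [Walk.support_map, List.mem_map] at hv
    obtain ⟨w, -, rfl⟩ := hv
    exact w.2 hvS

lemma IsMinVertexCover.exists_adj_notMem {V : Type*} {G : SimpleGraph V} {C : Set V}
    (hC : IsMinVertexCover G C) {v : V} (hv : v ∈ C) : ∃ w, G.Adj v w ∧ w ∉ C := by
  obtain ⟨a, b, hab, ha, hb⟩ : ∃ a b, G.Adj a b ∧ a ∉ C \ {v} ∧ b ∉ C \ {v} := by
    simpa [_root_.IsVertexCover] using hC.2 (C \ {v}) (Set.sdiff_singleton_ssubset.mpr hv)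
  rcases hC.1 hab with haC | hbC
  · obtain rfl : a = v := by by_contra h; exact ha ⟨haC, h⟩
    exact ⟨b, hab, fun hbC => hb ⟨hbC, hab.ne'⟩⟩
  · obtain rfl : b = v := by by_contra h; exact hb ⟨hbC, h⟩
    exact ⟨a, hab.symm, fun haC => ha ⟨haC, hab.ne⟩⟩

section Extension

variable {V : Type*} [Fintype V] {G : SimpleGraph V}

lemma gext_adj {a b : (V ⊕ Fin (Fintype.card V + 3)) ⊕ Bool} :
    (Gext G).Adj a b ↔ extRel G a b ∨ extRel G b a := by
  rw [Gext, fromRel_adj, and_iff_right_iff_imp]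
  rintro h rfl
  rcases a with (v | i) | (_ | _) <;> simp_all [extRel]

def extFVS (C : Set V) : Set ((V ⊕ Fin (Fintype.card V + 3)) ⊕ Bool) :=
  (fun v : V => (Sum.inl (Sum.inl v) : (V ⊕ Fin (Fintype.card V + 3)) ⊕ Bool)) '' C ∪
    {z | ∃ i : Fin (Fintype.card V + 3), i ≠ 0 ∧ z = Sum.inl (Sum.inr i)}

variable {C : Set V}

@[simp] lemma inl_inl_mem_extFVS {v : V} : .inl (.inl v) ∈ extFVS C ↔ v ∈ C := by
  simp [extFVS]

@[simp] lemma inl_inr_mem_extFVS {i : Fin (Fintype.card V + 3)} :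
    .inl (.inr i) ∈ extFVS C ↔ i ≠ 0 := by
  simp [extFVS]

@[simp] lemma inr_notMem_extFVS {b : Bool} : .inr b ∉ extFVS C := by
  simp [extFVS]

lemma isFVS_extFVS (hC : _root_.IsVertexCover G C) : IsFVS (Gext G) (extFVS C) := by
  refine isFVS_iff_s15.mpr fun u c hc => ?_
  by_contra! hcS
  have hy : .inr true ∉ c.support := hc.notMem_support (.inl (.inr 0)) fun w hw hwc => by
    have := hcS w hwc
    rcases w with (w | i) | b <;> simp_all [gext_adj, extRel]
  have hx₀ : .inl (.inr 0) ∉ c.support := hc.notMem_support (.inr false) fun w hw hwc => by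
    rcases w with (w | i) | (_ | _) <;> simp_all [gext_adj, extRel]
  have hV : ∀ v : V, .inl (.inl v) ∉ c.support := fun v hv => by
    refine hc.notMem_support (.inr false) (fun w hw hwc => ?_) hv
    rcases w with (w | i) | (_ | _)
    · have hvw : G.Adj v w := by simpa [gext_adj, extRel, G.adj_comm] using hw
      rcases hC hvw with h | h
      · exact absurd (inl_inl_mem_extFVS.mpr h) (hcS _ hv)
      · exact absurd (inl_inl_mem_extFVS.mpr h) (hcS _ hwc)
    all_goals simp_all [gext_adj, extRel]
  have hx : .inr false ∉ c.support := hc.notMem_support (.inr false) fun w hw hwc => by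
    have := hcS w hwc
    rcases w with (w | i) | (_ | _) <;> simp_all [gext_adj, extRel]
  rcases u with (v | i) | (_ | _)
  · exact hV v c.start_mem_support
  · obtain rfl : i = 0 := by simpa using hcS _ c.start_mem_support
    exact hx₀ c.start_mem_support
  · exact hx c.start_mem_support
  · exact hy c.start_mem_support

lemma isMinFVS_extFVS (hC : IsMinVertexCover G C) : IsMinFVS (Gext G) (extFVS C) := by
  refine ⟨isFVS_extFVS hC.1, fun T hT hT_fvs => ?_⟩
  obtain ⟨s, hsS, hsT⟩ := Set.exists_of_ssubset hT
  rcases hsS with ⟨v, hvC, rfl⟩ | ⟨i, hi, rfl⟩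
  · obtain ⟨w, hvw, hwC⟩ := hC.exists_adj_notMem hvC
    have hcycle := Walk.isCycle_triangle (H := Gext G) (a := .inr false)
      (b := .inl (.inl v)) (c := .inl (.inl w))
      (by simp [gext_adj, extRel]) (by simp [gext_adj, extRel, hvw]) (by simp [gext_adj, extRel])
    obtain ⟨z, hz, hzT⟩ := isFVS_iff_s15.mp hT_fvs _ _ hcycle
    have := hT.subset hzT
    simp only [Walk.support_cons, Walk.support_nil, List.mem_cons, List.not_mem_nil,
      or_false] at hz
    rcases hz with rfl | rfl | rfl | rfl <;> simp_all
  · have hcycle := Walk.isCycle_square (H := Gext G) (a := .inr false)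
      (b := .inl (.inr i)) (c := .inr true) (d := .inl (.inr 0))
      (by simp [gext_adj, extRel]) (by simp [gext_adj, extRel]) (by simp [gext_adj, extRel])
      (by simp [gext_adj, extRel]) (by simp) (by simpa using hi)
    obtain ⟨z, hz, hzT⟩ := isFVS_iff_s15.mp hT_fvs _ _ hcycle
    have := hT.subset hzT
    simp only [Walk.support_cons, Walk.support_nil, List.mem_cons, List.not_mem_nil,
      or_false] at hz
    rcases hz with rfl | rfl | rfl | rfl | rfl <;> simp_all

lemma ncard_extFVS (C : Set V) : (extFVS C).ncard = C.ncard + (Fintype.card V + 2) := by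
  have himage : {z : (V ⊕ Fin (Fintype.card V + 3)) ⊕ Bool | ∃ i, i ≠ 0 ∧ z = .inl (.inr i)} =
      (fun i => .inl (.inr i)) '' {0}ᶜ := by
    ext z; simp [eq_comm]
  rw [extFVS, himage, Set.ncard_union_eq (Set.disjoint_left.mpr (by simp)),
    Set.ncard_image_of_injective _ (fun _ _ h => by simpa using h),
    Set.ncard_image_of_injective _ (fun _ _ h => by simpa using h), Set.ncard_compl]
  simp

end Extension

/-- If `C` is a minimal vertex cover of `G` with `|C| ≥ k`, then
`C ∪ {x₂, …, x_{n+3}}` is a minimal feedback vertex set of `G'` of size at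
least `k + n + 2`. -/
theorem minimal_fvs_of_minimal_vc {V : Type*} [Fintype V] (G : SimpleGraph V)
    (k : ℕ) (C : Set V) (hC : IsMinVertexCover G C) (hk : k ≤ C.ncard) :
    IsMinFVS (Gext G)
      ((fun v : V => (Sum.inl (Sum.inl v) : (V ⊕ Fin (Fintype.card V + 3)) ⊕ Bool)) '' C ∪
        {z | ∃ i : Fin (Fintype.card V + 3), i ≠ 0 ∧ z = Sum.inl (Sum.inr i)}) ∧
    k + Fintype.card V + 2 ≤
      ((fun v : V => (Sum.inl (Sum.inl v) : (V ⊕ Fin (Fintype.card V + 3)) ⊕ Bool)) '' C ∪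
        {z | ∃ i : Fin (Fintype.card V + 3), i ≠ 0 ∧ z = Sum.inl (Sum.inr i)}).ncard := by
  refine ⟨isMinFVS_extFVS hC, ?_⟩
  change k + Fintype.card V + 2 ≤ (extFVS C).ncard
  rw [ncard_extFVS]
  omega
end
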